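/- (Lemma 3.7, identity (3.19).) Suppose τ₁, τ₂ : (ℕ → ℂ) × (ℕ → ℂ) → ℂ are continuous and (τ₁, τ₂) satisfies the KP-mKP Fay identity. Then for all x, y : ℕ → ℂ and all pairwise distinct nonzero s₁, s₂, s₃ ∈ ℂ: τ₁(x, y) · τ₂(x, y + [s₁] − [s₂] − [s₃]) = ( (s₃ − s₁)/(s₃ − s₂) ) · τ₁(x, y + [s₁] − [s₂]) · τ₂(x, y − [s₃]) + ( (s₂ − s₁)/(s₂ − s₃) ) · τ₁(x, y + [s₁] − [s₃]) · τ₂(x, y − [s₂]). -/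
import Mathlib

/-- The shift `[s] : ℕ → ℂ`, `[s](k) = s^(k+1)/(k+1)`, representing the
sequence `(s, s²/2, s³/3, …)` of time variables. -/
noncomputable def sh (s : ℂ) : ℕ → ℂ := fun k => s ^ (k + 1) / ((k : ℂ) + 1)

/-- The KP-mKP Fay identity (equation (3.1) of the paper) for a pair of tau
functions `(τ₁, τ₂)`. -/
def KPmKPFay (τ₁ τ₂ : (ℕ → ℂ) × (ℕ → ℂ) → ℂ) : Prop :=
  ∀ x y : ℕ → ℂ, ∀ s0 s1 s2 s3 t0 t1 t2 t3 : ℂ,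
    s0 ≠ 0 → s1 ≠ 0 → s2 ≠ 0 → s3 ≠ 0 →
    s0 ≠ s1 → s0 ≠ s2 → s0 ≠ s3 → s1 ≠ s2 → s1 ≠ s3 → s2 ≠ s3 →
    t0 ≠ 0 → t1 ≠ 0 → t2 ≠ 0 → t3 ≠ 0 →
    t0 ≠ t1 → t0 ≠ t2 → t0 ≠ t3 → t1 ≠ t2 → t1 ≠ t3 → t2 ≠ t3 →
    (s1 * (s1 - s0) / ((s1 - s2) * (s1 - s3)))
        * τ₁ (x + sh s2 + sh s3, y + sh t1 + sh t2 + sh t3)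
        * τ₂ (x + sh s0 + sh s1, y + sh t0)
      + (s2 * (s2 - s0) / ((s2 - s3) * (s2 - s1)))
        * τ₁ (x + sh s3 + sh s1, y + sh t1 + sh t2 + sh t3)
        * τ₂ (x + sh s0 + sh s2, y + sh t0)
      + (s3 * (s3 - s0) / ((s3 - s1) * (s3 - s2)))
        * τ₁ (x + sh s1 + sh s2, y + sh t1 + sh t2 + sh t3)
        * τ₂ (x + sh s0 + sh s3, y + sh t0)
    = (t1 * (t1 - t0) / ((t1 - t2) * (t1 - t3)))
        * τ₂ (x + sh s1 + sh s2 + sh s3, y + sh t2 + sh t3)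
        * τ₁ (x + sh s0, y + sh t0 + sh t1)
      + (t2 * (t2 - t0) / ((t2 - t3) * (t2 - t1)))
        * τ₂ (x + sh s1 + sh s2 + sh s3, y + sh t3 + sh t1)
        * τ₁ (x + sh s0, y + sh t0 + sh t2)
      + (t3 * (t3 - t0) / ((t3 - t1) * (t3 - t2)))
        * τ₂ (x + sh s1 + sh s2 + sh s3, y + sh t1 + sh t2)
        * τ₁ (x + sh s0, y + sh t0 + sh t3)


lemma sh_zero : sh 0 = 0 := by funext k; simp [sh]

lemma continuous_sh : Continuous sh :=
  continuous_pi fun k => (continuous_pow (k+1)).div_const _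

open Filter Topology

lemma fay_aux (τ₁ τ₂ : (ℕ → ℂ) × (ℕ → ℂ) → ℂ)
    (hc1 : Continuous τ₁) (hc2 : Continuous τ₂)
    (hFay : ∀ x y : ℕ → ℂ, ∀ s0 s1 s2 s3 t0 t1 t2 t3 : ℂ,
    s0 ≠ 0 → s1 ≠ 0 → s2 ≠ 0 → s3 ≠ 0 →
    s0 ≠ s1 → s0 ≠ s2 → s0 ≠ s3 → s1 ≠ s2 → s1 ≠ s3 → s2 ≠ s3 →
    t0 ≠ 0 → t1 ≠ 0 → t2 ≠ 0 → t3 ≠ 0 →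
    t0 ≠ t1 → t0 ≠ t2 → t0 ≠ t3 → t1 ≠ t2 → t1 ≠ t3 → t2 ≠ t3 →
    (s1 * (s1 - s0) / ((s1 - s2) * (s1 - s3)))
        * τ₁ (x + sh s2 + sh s3, y + sh t1 + sh t2 + sh t3)
        * τ₂ (x + sh s0 + sh s1, y + sh t0)
      + (s2 * (s2 - s0) / ((s2 - s3) * (s2 - s1)))
        * τ₁ (x + sh s3 + sh s1, y + sh t1 + sh t2 + sh t3)
        * τ₂ (x + sh s0 + sh s2, y + sh t0)
      + (s3 * (s3 - s0) / ((s3 - s1) * (s3 - s2)))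
        * τ₁ (x + sh s1 + sh s2, y + sh t1 + sh t2 + sh t3)
        * τ₂ (x + sh s0 + sh s3, y + sh t0)
    = (t1 * (t1 - t0) / ((t1 - t2) * (t1 - t3)))
        * τ₂ (x + sh s1 + sh s2 + sh s3, y + sh t2 + sh t3)
        * τ₁ (x + sh s0, y + sh t0 + sh t1)
      + (t2 * (t2 - t0) / ((t2 - t3) * (t2 - t1)))
        * τ₂ (x + sh s1 + sh s2 + sh s3, y + sh t3 + sh t1)
        * τ₁ (x + sh s0, y + sh t0 + sh t2)
      + (t3 * (t3 - t0) / ((t3 - t1) * (t3 - t2)))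
        * τ₂ (x + sh s1 + sh s2 + sh s3, y + sh t1 + sh t2)
        * τ₁ (x + sh s0, y + sh t0 + sh t3))
    (x y : ℕ → ℂ) (s1 s2 s3 : ℂ)
    (h1 : s1 ≠ 0) (h2 : s2 ≠ 0) (h3 : s3 ≠ 0)
    (h12 : s1 ≠ s2) (h13 : s1 ≠ s3) (h23 : s2 ≠ s3) :
    τ₁ (x, y + sh s2 + sh s3) * τ₂ (x, y + sh s1)
      = ((s3 - s1) / (s3 - s2)) * τ₁ (x, y + sh s1 + sh s3) * τ₂ (x, y + sh s2)
        + ((s2 - s1) / (s2 - s3)) * τ₁ (x, y + sh s1 + sh s2) * τ₂ (x, y + sh s3) := by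
  have hdense : Dense (({0, s1, s2, s3} : Set ℂ)ᶜ) :=
    Set.Countable.dense_compl ℂ (Set.toFinite _).countable
  have hne : (𝓝[(({0, s1, s2, s3} : Set ℂ)ᶜ)] (0:ℂ)).NeBot :=
    mem_closure_iff_nhdsWithin_neBot.1 (hdense 0)
  set S : Set ℂ := ({0, s1, s2, s3} : Set ℂ)ᶜ with hSdef
  set L : ℂ → ℂ := fun ε =>
    τ₁ (x + sh (3*ε) + sh (4*ε), y + sh ε + sh s2 + sh s3)
        * τ₂ (x + sh ε + sh (2*ε), y + sh s1)
      + (-6) * τ₁ (x + sh (4*ε) + sh (2*ε), y + sh ε + sh s2 + sh s3)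
        * τ₂ (x + sh ε + sh (3*ε), y + sh s1)
      + 6 * τ₁ (x + sh (2*ε) + sh (3*ε), y + sh ε + sh s2 + sh s3)
        * τ₂ (x + sh ε + sh (4*ε), y + sh s1) with hLdef
  set R : ℂ → ℂ := fun ε =>
    (ε * (ε - s1) / ((ε - s2) * (ε - s3)))
        * τ₂ (x + sh (2*ε) + sh (3*ε) + sh (4*ε), y + sh s2 + sh s3)
        * τ₁ (x + sh ε, y + sh s1 + sh ε)
      + (s2 * (s2 - s1) / ((s2 - s3) * (s2 - ε)))
        * τ₂ (x + sh (2*ε) + sh (3*ε) + sh (4*ε), y + sh s3 + sh ε)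
        * τ₁ (x + sh ε, y + sh s1 + sh s2)
      + (s3 * (s3 - s1) / ((s3 - ε) * (s3 - s2)))
        * τ₂ (x + sh (2*ε) + sh (3*ε) + sh (4*ε), y + sh ε + sh s2)
        * τ₁ (x + sh ε, y + sh s1 + sh s3) with hRdef
  have hLR : ∀ᶠ ε in 𝓝[S] (0:ℂ), L ε = R ε := by
    filter_upwards [self_mem_nhdsWithin] with ε hε
    simp only [hSdef, Set.mem_compl_iff, Set.mem_insert_iff, Set.mem_singleton_iff,
      not_or] at hε
    obtain ⟨hε0, hεs1, hεs2, hεs3⟩ := hε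
    have h := hFay x y ε (2*ε) (3*ε) (4*ε) s1 ε s2 s3
      hε0 (mul_ne_zero two_ne_zero hε0) (mul_ne_zero (by norm_num) hε0)
      (mul_ne_zero (by norm_num) hε0)
      (fun h => hε0 (by linear_combination -h))
      (fun h => hε0 (by linear_combination -h/2))
      (fun h => hε0 (by linear_combination -h/3))
      (fun h => hε0 (by linear_combination -h))
      (fun h => hε0 (by linear_combination -h/2))
      (fun h => hε0 (by linear_combination -h))
      h1 hε0 h2 h3
      (fun h => hεs1 h.symm) h12 h13 hεs2 hεs3 h23
    have hε2 : ε^2 ≠ 0 := pow_ne_zero _ hε0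
    have c1 : (2*ε) * (2*ε - ε) / ((2*ε - 3*ε) * (2*ε - 4*ε)) = 1 := by
      rw [div_eq_iff (fun hcon => hε2 (by linear_combination hcon/2))]; ring
    have c2 : (3*ε) * (3*ε - ε) / ((3*ε - 4*ε) * (3*ε - 2*ε)) = -6 := by
      rw [div_eq_iff (fun hcon => hε2 (by linear_combination -hcon))]; ring
    have c3 : (4*ε) * (4*ε - ε) / ((4*ε - 2*ε) * (4*ε - 3*ε)) = 6 := by
      rw [div_eq_iff (fun hcon => hε2 (by linear_combination hcon/2))]; ring
    rw [c1, c2, c3] at h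
    simpa [hLdef, hRdef, one_mul] using h
  have csh : ∀ c : ℂ, Continuous fun ε : ℂ => sh (c * ε) :=
    fun c => continuous_sh.comp (continuous_const.mul continuous_id)
  have cY3 : Continuous fun ε : ℂ => y + sh ε + sh s2 + sh s3 :=
    ((continuous_const.add continuous_sh).add continuous_const).add continuous_const
  have cX3 : Continuous fun ε : ℂ => x + sh (2*ε) + sh (3*ε) + sh (4*ε) :=
    ((continuous_const.add (csh 2)).add (csh 3)).add (csh 4)
  have cXe : Continuous fun ε : ℂ => x + sh ε := continuous_const.add continuous_sh
  have hcL : ContinuousAt L 0 := by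
    rw [hLdef]
    apply Continuous.continuousAt
    refine Continuous.add (Continuous.add ?_ ?_) ?_
    · exact (hc1.comp (((continuous_const.add (csh 3)).add (csh 4)).prodMk cY3)).mul
        (hc2.comp (((continuous_const.add continuous_sh).add (csh 2)).prodMk continuous_const))
    · exact ((continuous_const.mul
        (hc1.comp (((continuous_const.add (csh 4)).add (csh 2)).prodMk cY3))).mul
        (hc2.comp (((continuous_const.add continuous_sh).add (csh 3)).prodMk continuous_const)))
    · exact ((continuous_const.mul
        (hc1.comp (((continuous_const.add (csh 2)).add (csh 3)).prodMk cY3))).mul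
        (hc2.comp (((continuous_const.add continuous_sh).add (csh 4)).prodMk continuous_const)))
  have hcR : ContinuousAt R 0 := by
    rw [hRdef]
    have hd1 : ((0:ℂ) - s2) * ((0:ℂ) - s3) ≠ 0 :=
      mul_ne_zero (fun h => h2 (sub_eq_zero.1 h).symm) (fun h => h3 (sub_eq_zero.1 h).symm)
    have hd2 : (s2 - s3) * (s2 - (0:ℂ)) ≠ 0 :=
      mul_ne_zero (sub_ne_zero.2 h23) (by simpa using h2)
    have hd3 : (s3 - (0:ℂ)) * (s3 - s2) ≠ 0 :=
      mul_ne_zero (by simpa using h3) (sub_ne_zero.2 fun h => h23 h.symm)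
    have q1 : ContinuousAt (fun ε : ℂ => ε * (ε - s1) / ((ε - s2) * (ε - s3))) 0 :=
      ContinuousAt.div (by fun_prop) (by fun_prop) hd1
    have q2 : ContinuousAt (fun ε : ℂ => s2 * (s2 - s1) / ((s2 - s3) * (s2 - ε))) 0 :=
      ContinuousAt.div (by fun_prop) (by fun_prop) hd2
    have q3 : ContinuousAt (fun ε : ℂ => s3 * (s3 - s1) / ((s3 - ε) * (s3 - s2))) 0 :=
      ContinuousAt.div (by fun_prop) (by fun_prop) hd3
    refine ContinuousAt.add (ContinuousAt.add ?_ ?_) ?_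
    · exact (q1.mul ((hc2.comp (cX3.prodMk continuous_const)).continuousAt)).mul
        ((hc1.comp (cXe.prodMk (continuous_const.add continuous_sh))).continuousAt)
    · exact (q2.mul ((hc2.comp (cX3.prodMk
        ((continuous_const.add continuous_sh) : Continuous fun ε : ℂ => y + sh s3 + sh ε))).continuousAt)).mul
        ((hc1.comp (cXe.prodMk continuous_const)).continuousAt)
    · exact (q3.mul ((hc2.comp (cX3.prodMk
        (((continuous_const.add continuous_sh).add continuous_const) : Continuous fun ε : ℂ => y + sh ε + sh s2))).continuousAt)).mul
        ((hc1.comp (cXe.prodMk continuous_const)).continuousAt)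
  have hL0 : L 0 = τ₁ (x, y + sh s2 + sh s3) * τ₂ (x, y + sh s1) := by
    simp only [hLdef, mul_zero, sh_zero, add_zero]
    ring
  have hR0 : R 0 = ((s3 - s1) / (s3 - s2)) * τ₁ (x, y + sh s1 + sh s3) * τ₂ (x, y + sh s2)
      + ((s2 - s1) / (s2 - s3)) * τ₁ (x, y + sh s1 + sh s2) * τ₂ (x, y + sh s3) := by
    simp only [hRdef, mul_zero, sh_zero, add_zero, zero_mul, zero_div, zero_add, sub_zero]
    rw [show s2 * (s2 - s1) / ((s2 - s3) * s2) = (s2 - s1) / (s2 - s3) by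
        rw [mul_comm (s2 - s3) s2, mul_div_mul_left _ _ h2],
      show s3 * (s3 - s1) / (s3 * (s3 - s2)) = (s3 - s1) / (s3 - s2) from
        mul_div_mul_left _ _ h3]
    ring
  have tL : Tendsto L (𝓝[S] 0)
      (𝓝 (τ₁ (x, y + sh s2 + sh s3) * τ₂ (x, y + sh s1))) := by
    rw [← hL0]; exact hcL.continuousWithinAt
  have tR : Tendsto R (𝓝[S] 0)
      (𝓝 (((s3 - s1) / (s3 - s2)) * τ₁ (x, y + sh s1 + sh s3) * τ₂ (x, y + sh s2)
        + ((s2 - s1) / (s2 - s3)) * τ₁ (x, y + sh s1 + sh s2) * τ₂ (x, y + sh s3))) := by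
    rw [← hR0]; exact hcR.continuousWithinAt
  exact tendsto_nhds_unique (tL.congr' hLR) tR

/-- Lemma 3.7, identity (3.19). -/
theorem fay_identity_319 (τ₁ τ₂ : (ℕ → ℂ) × (ℕ → ℂ) → ℂ)
    (hc1 : Continuous τ₁) (hc2 : Continuous τ₂)
    (hFay : KPmKPFay τ₁ τ₂) :
    ∀ x y : ℕ → ℂ, ∀ s1 s2 s3 : ℂ,
      s1 ≠ 0 → s2 ≠ 0 → s3 ≠ 0 → s1 ≠ s2 → s1 ≠ s3 → s2 ≠ s3 →
      τ₁ (x, y) * τ₂ (x, y + sh s1 - sh s2 - sh s3)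
        = ((s3 - s1) / (s3 - s2)) * τ₁ (x, y + sh s1 - sh s2) * τ₂ (x, y - sh s3)
          + ((s2 - s1) / (s2 - s3)) * τ₁ (x, y + sh s1 - sh s3) * τ₂ (x, y - sh s2) := by
  intro x y s1 s2 s3 h1 h2 h3 h12 h13 h23
  have h := fay_aux τ₁ τ₂ hc1 hc2 hFay x (y - sh s2 - sh s3) s1 s2 s3 h1 h2 h3 h12 h13 h23
  rw [show y - sh s2 - sh s3 + sh s2 + sh s3 = y by abel,
    show y - sh s2 - sh s3 + sh s1 = y + sh s1 - sh s2 - sh s3 by abel,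
    show y + sh s1 - sh s2 - sh s3 + sh s3 = y + sh s1 - sh s2 by abel,
    show y - sh s2 - sh s3 + sh s2 = y - sh s3 by abel,
    show y + sh s1 - sh s2 - sh s3 + sh s2 = y + sh s1 - sh s3 by abel,
    show y - sh s2 - sh s3 + sh s3 = y - sh s2 by abel] at h
  exact h
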